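/- arXiv:2311.06839 — 3 statements merged into one kernel-verified Lean document; each statement's English description precedes it below -/
import Mathlib

section
/- For real λ > 1, 2·( (λ³−1)/(λ⁴−1) + (1 − (λ³−1)/(λ⁴−1))·(1/λ²) ) + ( (λ³−1)/(λ⁴−1)·λ² + (1 − (λ³−1)/(λ⁴−1))·(1/λ²) ) > 3. -/
/-! The excess over `3` is exactly `(λ - 1)³ / (λ² + 1)`: after clearing denominators the
numerator is `λ² (λ - 1)⁴ (λ + 1)`, and `λ⁴ - 1 = (λ - 1)(λ + 1)(λ² + 1)` cancels all but
one factor `λ - 1`. -/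

lemma two_value_sum_eq_three_add (lam : ℝ) (h0 : lam ≠ 0) (h4 : lam ^ 4 ≠ 1) :
    2 * ((lam ^ 3 - 1) / (lam ^ 4 - 1)
          + (1 - (lam ^ 3 - 1) / (lam ^ 4 - 1)) * (1 / lam ^ 2))
      + ((lam ^ 3 - 1) / (lam ^ 4 - 1) * lam ^ 2
          + (1 - (lam ^ 3 - 1) / (lam ^ 4 - 1)) * (1 / lam ^ 2))
      = 3 + (lam - 1) ^ 3 / (lam ^ 2 + 1) := by
  have h4' : lam ^ 4 - 1 ≠ 0 := sub_ne_zero.mpr h4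
  have h2 : lam ^ 2 + 1 ≠ 0 := by positivity
  field_simp
  ring

/-- The two-value critical point inequality from the proof of the clipped gradient
alignment theorem. -/
theorem two_value_critical_point_inequality (lam : ℝ) (hlam : 1 < lam) :
    2 * ((lam ^ 3 - 1) / (lam ^ 4 - 1)
          + (1 - (lam ^ 3 - 1) / (lam ^ 4 - 1)) * (1 / lam ^ 2))
      + ((lam ^ 3 - 1) / (lam ^ 4 - 1) * lam ^ 2
          + (1 - (lam ^ 3 - 1) / (lam ^ 4 - 1)) * (1 / lam ^ 2)) > 3 := by
  have h4 : lam ^ 4 ≠ 1 := (one_lt_pow₀ hlam four_ne_zero).ne'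
  rw [two_value_sum_eq_three_add lam (zero_lt_one.trans hlam).ne' h4, gt_iff_lt, lt_add_iff_pos_right]
  have : 0 < lam - 1 := sub_pos.mpr hlam
  positivity
end

section
/- Let W1 ∈ R^{m×d} and W2 ∈ R^{1×m} evolve under gradient flow of a differentiable loss L that depends on W1, W2 only through their product W = W2·W1 (so ∂L/∂W1 = W2ᵀ·G and ∂L/∂W2 = G·W1ᵀ where G = ∂L/∂W). If at time 0 we have W1·W1ᵀ = W2ᵀ·W2, then W1(t)·W1(t)ᵀ = W2(t)ᵀ·W2(t) for all t ≥ 0. -/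
/-!
Along the flow both Gram matrices move with the same velocity:
`d/dt (W1 W1ᵀ) = -(W2ᵀ G W1ᵀ + W1 Gᵀ W2) = d/dt (W2ᵀ W2)`.
Hence `W1 W1ᵀ - W2ᵀ W2` is constant, and it vanishes at time 0.
-/

open Matrix

attribute [local instance] Matrix.normedAddCommGroup Matrix.normedSpace

section MatrixCalculus

variable {𝕜 : Type*} [NontriviallyNormedField 𝕜] [CompleteSpace 𝕜]
  {l m n : Type*} [Fintype l] [Fintype m] [Fintype n] {x : 𝕜}

theorem HasDerivAt.matrix_mul {A : 𝕜 → Matrix l m 𝕜} {B : 𝕜 → Matrix m n 𝕜}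
    {A' : Matrix l m 𝕜} {B' : Matrix m n 𝕜} (hA : HasDerivAt A A' x) (hB : HasDerivAt B B' x) :
    HasDerivAt (fun y => A y * B y) (A' * B x + A x * B') x := by
  rw [add_comm]
  exact (mulLinearMap 𝕜).toContinuousBilinearMap.hasDerivAt_of_bilinear (fun _ => hA) (fun _ => hB)

theorem HasDerivAt.matrix_transpose {A : 𝕜 → Matrix m n 𝕜} {A' : Matrix m n 𝕜}
    (hA : HasDerivAt A A' x) : HasDerivAt (fun y => (A y)ᵀ) A'ᵀ x :=
  (transposeLinearEquiv m n 𝕜 𝕜).toLinearMap.toContinuousLinearMap.hasFDerivAt.comp_hasDerivAt x hA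

theorem hasDerivAt_mul_transpose_sub_transpose_mul_of_gradientFlow {W1 : 𝕜 → Matrix m n 𝕜}
    {W2 : 𝕜 → Matrix l m 𝕜} {G : Matrix l n 𝕜}
    (hW1 : HasDerivAt W1 (-((W2 x)ᵀ * G)) x) (hW2 : HasDerivAt W2 (-(G * (W1 x)ᵀ)) x) :
    HasDerivAt (fun y => W1 y * (W1 y)ᵀ - (W2 y)ᵀ * W2 y) 0 x := by
  have hzero : (0 : Matrix m m 𝕜) =
      (-((W2 x)ᵀ * G) * (W1 x)ᵀ + W1 x * (-((W2 x)ᵀ * G))ᵀ) -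
        ((-(G * (W1 x)ᵀ))ᵀ * W2 x + (W2 x)ᵀ * -(G * (W1 x)ᵀ)) := by
    simp only [transpose_neg, transpose_mul, transpose_transpose, Matrix.neg_mul, Matrix.mul_neg,
      Matrix.mul_assoc]
    abel
  rw [hzero]
  exact (hW1.matrix_mul hW1.matrix_transpose).sub (hW2.matrix_transpose.matrix_mul hW2)

end MatrixCalculus

/-- Balancedness invariant for two-layer linear networks under gradient flow:
if `W1 W1ᵀ = W2ᵀ W2` at time 0, it holds for all `t ≥ 0`. -/
theorem balancedness_invariant {m d : ℕ}
    (W1 : ℝ → Matrix (Fin m) (Fin d) ℝ)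
    (W2 : ℝ → Matrix (Fin 1) (Fin m) ℝ)
    (G : ℝ → Matrix (Fin 1) (Fin d) ℝ)
    (hW1 : ∀ t : ℝ, 0 ≤ t → HasDerivAt W1 (-((W2 t)ᵀ * G t)) t)
    (hW2 : ∀ t : ℝ, 0 ≤ t → HasDerivAt W2 (-(G t * (W1 t)ᵀ)) t)
    (h0 : W1 0 * (W1 0)ᵀ = (W2 0)ᵀ * W2 0) :
    ∀ t : ℝ, 0 ≤ t → W1 t * (W1 t)ᵀ = (W2 t)ᵀ * W2 t := by
  intro t ht
  have hflow : ∀ s ∈ Set.Icc 0 t,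
      HasDerivAt (fun y => W1 y * (W1 y)ᵀ - (W2 y)ᵀ * W2 y) 0 s := fun s hs =>
    hasDerivAt_mul_transpose_sub_transpose_mul_of_gradientFlow (hW1 s hs.1) (hW2 s hs.1)
  have hconst := constant_of_has_deriv_right_zero
    (fun s hs => (hflow s hs).continuousAt.continuousWithinAt)
    (fun s hs => (hflow s (Set.Ico_subset_Icc_self hs)).hasDerivWithinAt) t ⟨ht, le_rfl⟩
  rwa [h0, sub_self, sub_eq_zero] at hconst
end

section
/- Compute d/dt of W1·W1ᵀ − W2ᵀ·W2 under gradient flow: with dW1/dt = −W2ᵀG Xᵀ and dW2/dt = −G Xᵀ W1ᵀ (for any matrices G ∈ R^{1×n}, X ∈ R^{d×n}), the derivative d/dt(W1 W1ᵀ) equals d/dt(W2ᵀ W2); explicitly both equal −W1 X Gᵀ W2 − W2ᵀ G Xᵀ W1ᵀ. -/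
open Matrix

attribute [local instance] Matrix.normedAddCommGroup Matrix.normedSpace

/-! Both `W1 W1ᵀ` and `W2ᵀ W2` are of the form `A Aᵀ`, so their derivatives have the shape
`S + Sᵀ`. Under the gradient flow the two matrices `S` coincide: `W1' W1ᵀ` and `W2ᵀ W2'` are both
`-W2ᵀ G Xᵀ W1ᵀ`. -/

namespace HasDerivAt

variable {𝕜 : Type*} [NontriviallyNormedField 𝕜] [CompleteSpace 𝕜]
  {l m n : Type*} [Fintype l] [Fintype m] [Fintype n] {x : 𝕜}

theorem matrix_transpose_s5 {A : 𝕜 → Matrix m n 𝕜} {A' : Matrix m n 𝕜} (hA : HasDerivAt A A' x) :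
    HasDerivAt (fun s => (A s)ᵀ) A'ᵀ x :=
  (transposeLinearEquiv m n 𝕜 𝕜).toContinuousLinearEquiv.hasFDerivAt.comp_hasDerivAt x hA

theorem matrix_mul_s5 {A : 𝕜 → Matrix l m 𝕜} {B : 𝕜 → Matrix m n 𝕜}
    {A' : Matrix l m 𝕜} {B' : Matrix m n 𝕜} (hA : HasDerivAt A A' x) (hB : HasDerivAt B B' x) :
    HasDerivAt (fun s => A s * B s) (A' * B x + A x * B') x := by
  let mulCLM : Matrix l m 𝕜 →L[𝕜] Matrix m n 𝕜 →L[𝕜] Matrix l n 𝕜 :=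
    LinearMap.toContinuousLinearMap
      (LinearMap.toContinuousLinearMap.toLinearMap ∘ₗ mulLinearMap 𝕜)
  rw [add_comm]
  exact mulCLM.hasDerivAt_of_bilinear (fun _ => hA) (fun _ => hB)

theorem matrix_mul_transpose_self {A : 𝕜 → Matrix m n 𝕜} {A' : Matrix m n 𝕜}
    (hA : HasDerivAt A A' x) :
    HasDerivAt (fun s => A s * (A s)ᵀ) (A' * (A x)ᵀ + (A' * (A x)ᵀ)ᵀ) x := by
  simpa [transpose_mul] using hA.matrix_mul_s5 hA.matrix_transpose_s5

theorem matrix_transpose_mul_self {A : 𝕜 → Matrix m n 𝕜} {A' : Matrix m n 𝕜}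
    (hA : HasDerivAt A A' x) :
    HasDerivAt (fun s => (A s)ᵀ * A s) ((A x)ᵀ * A' + ((A x)ᵀ * A')ᵀ) x := by
  simpa [transpose_mul, add_comm] using hA.matrix_transpose_s5.matrix_mul_s5 hA

end HasDerivAt

/-- Derivative computation for the balancedness invariant: under the gradient-flow
dynamics `dW1/dt = −W2ᵀ G Xᵀ`, `dW2/dt = −G Xᵀ W1ᵀ`, the derivatives of `W1 W1ᵀ`
and `W2ᵀ W2` coincide and both equal `−W1 X Gᵀ W2 − W2ᵀ G Xᵀ W1ᵀ`. -/
theorem balancedness_derivative {m d n : ℕ}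
    (W1 : ℝ → Matrix (Fin m) (Fin d) ℝ)
    (W2 : ℝ → Matrix (Fin 1) (Fin m) ℝ)
    (G : Matrix (Fin 1) (Fin n) ℝ) (X : Matrix (Fin d) (Fin n) ℝ)
    (t : ℝ)
    (hW1 : HasDerivAt W1 (-((W2 t)ᵀ * G * Xᵀ)) t)
    (hW2 : HasDerivAt W2 (-(G * Xᵀ * (W1 t)ᵀ)) t) :
    HasDerivAt (fun s => W1 s * (W1 s)ᵀ)
        (-(W1 t * X * Gᵀ * W2 t) - (W2 t)ᵀ * G * Xᵀ * (W1 t)ᵀ) t ∧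
    HasDerivAt (fun s => (W2 s)ᵀ * W2 s)
        (-(W1 t * X * Gᵀ * W2 t) - (W2 t)ᵀ * G * Xᵀ * (W1 t)ᵀ) t := by
  set S := -((W2 t)ᵀ * G * Xᵀ * (W1 t)ᵀ)
  have hS₁ : -((W2 t)ᵀ * G * Xᵀ) * (W1 t)ᵀ = S := by simp [S]
  have hS₂ : (W2 t)ᵀ * -(G * Xᵀ * (W1 t)ᵀ) = S := by simp [S, Matrix.mul_assoc]
  have hsum : S + Sᵀ = -(W1 t * X * Gᵀ * W2 t) - (W2 t)ᵀ * G * Xᵀ * (W1 t)ᵀ := by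
    simp only [S, transpose_neg, transpose_mul, transpose_transpose, Matrix.mul_assoc]
    abel
  constructor
  · simpa only [hS₁, hsum] using hW1.matrix_mul_transpose_self
  · simpa only [hS₂, hsum] using hW2.matrix_transpose_mul_self
end
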